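/- arXiv:1405.4297 — 2 statements merged into one kernel-verified Lean document; each statement's English description precedes it below -/
import Mathlib

section
/- Let X, Y ⊆ D be disjoint with X <₁ Y, and suppose g : D → D preserves <₁ on X, and the type of (g(x), g(y)) depends only on the type of (x, y) for x ∈ X, y ∈ Y (canonicity between X and Y). Assume further that for all x ∈ X, y ∈ Y with up(x,y), there exists z ∈ X with x <₁ z and dow(z,y). If there exist x ∈ X, y ∈ Y with up(x,y) and g(y) <₁ g(x), then g reverses <₁ between X and Y: for all x ∈ X, y ∈ Y, g(y) <₁ g(x). -/
/-! Canonicity means that the `<₁`-relation between `g x` and `g y` depends only on whether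
`(x, y)` is an up-pair or a down-pair. The witness settles the up-pairs. For the down-pairs,
density turns the witness `(x₀, y₀)` into a down-pair `(z, y₀)` with `x₀ <₁ z`, and since `g`
preserves `<₁` on `X` we get `g y₀ <₁ g x₀ <₁ g z`. -/

def up {D : Type*} (r₁ r₂ : D → D → Prop) (a b : D) : Prop := r₁ a b ∧ r₂ a b

def dow {D : Type*} (r₁ r₂ : D → D → Prop) (a b : D) : Prop := r₁ a b ∧ r₂ b a

def sameType {D : Type*} (r₁ r₂ : D → D → Prop) (a b c d : D) : Prop :=
  (up r₁ r₂ a b ↔ up r₁ r₂ c d) ∧ (dow r₁ r₂ a b ↔ dow r₁ r₂ c d) ∧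
  (up r₁ r₂ b a ↔ up r₁ r₂ d c) ∧ (dow r₁ r₂ b a ↔ dow r₁ r₂ d c)

section SameType

variable {D : Type*} {r₁ r₂ : D → D → Prop} {a b c d : D}

theorem sameType.swap (h : sameType r₁ r₂ a b c d) : sameType r₁ r₂ b a d c :=
  ⟨h.2.2.1, h.2.2.2, h.1, h.2.1⟩

theorem sameType.rel₁ [Std.Irrefl r₁] [Std.Trichotomous r₂]
    (h : sameType r₁ r₂ a b c d) (hab : r₁ a b) : r₁ c d := by
  rcases trichotomous_of r₂ a b with h₂ | rfl | h₂
  · exact (h.1.mp ⟨hab, h₂⟩).1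
  · exact absurd hab (irrefl a)
  · exact (h.2.1.mp ⟨hab, h₂⟩).1

variable [Std.Asymm r₁] [Std.Asymm r₂]

theorem sameType_of_up (hab : up r₁ r₂ a b) (hcd : up r₁ r₂ c d) : sameType r₁ r₂ a b c d := by
  have := asymm_of r₁ hab.1; have := asymm_of r₁ hcd.1
  have := asymm_of r₂ hab.2; have := asymm_of r₂ hcd.2
  unfold sameType up dow at *
  tauto

theorem sameType_of_dow (hab : dow r₁ r₂ a b) (hcd : dow r₁ r₂ c d) :
    sameType r₁ r₂ a b c d := by
  have := asymm_of r₁ hab.1; have := asymm_of r₁ hcd.1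
  have := asymm_of r₂ hab.2; have := asymm_of r₂ hcd.2
  unfold sameType up dow at *
  tauto

end SameType

theorem rel₁_map_swap_of_sameType {D : Type*} {r₁ r₂ : D → D → Prop}
    [Std.Irrefl r₁] [Std.Trichotomous r₂] {X Y : Set D} {g : D → D}
    (hcan : ∀ x ∈ X, ∀ y ∈ Y, ∀ x' ∈ X, ∀ y' ∈ Y,
      sameType r₁ r₂ x y x' y' → sameType r₁ r₂ (g x) (g y) (g x') (g y'))
    {x y x' y' : D} (hx : x ∈ X) (hy : y ∈ Y) (hx' : x' ∈ X) (hy' : y' ∈ Y)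
    (hst : sameType r₁ r₂ x y x' y') (h : r₁ (g y) (g x)) : r₁ (g y') (g x') :=
  (hcan x hx y hy x' hx' y' hy' hst).swap.rel₁ h

theorem stmt_7_general {D : Type*} (r₁ r₂ : D → D → Prop)
    [IsStrictTotalOrder D r₁] [IsStrictTotalOrder D r₂]
    (X Y : Set D) (g : D → D)
    (hXY : ∀ x ∈ X, ∀ y ∈ Y, r₁ x y)
    (hpres : ∀ x ∈ X, ∀ x' ∈ X, r₁ x x' → r₁ (g x) (g x'))
    (hcan : ∀ x ∈ X, ∀ y ∈ Y, ∀ x' ∈ X, ∀ y' ∈ Y,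
      sameType r₁ r₂ x y x' y' → sameType r₁ r₂ (g x) (g y) (g x') (g y'))
    (hdense : ∀ x ∈ X, ∀ y ∈ Y, up r₁ r₂ x y →
      ∃ z ∈ X, r₁ x z ∧ dow r₁ r₂ z y)
    (hwit : ∃ x ∈ X, ∃ y ∈ Y, up r₁ r₂ x y ∧ r₁ (g y) (g x)) :
    ∀ x ∈ X, ∀ y ∈ Y, r₁ (g y) (g x) := by
  obtain ⟨x₀, hx₀, y₀, hy₀, hup₀, hg₀⟩ := hwit
  intro x hx y hy
  have hxy := hXY x hx y hy
  rcases trichotomous_of r₂ x y with hup | rfl | hdow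
  · exact rel₁_map_swap_of_sameType hcan hx₀ hy₀ hx hy (sameType_of_up hup₀ ⟨hxy, hup⟩) hg₀
  · exact absurd hxy (irrefl x)
  · obtain ⟨z, hz, hx₀z, hdow₀⟩ := hdense x₀ hx₀ y₀ hy₀ hup₀
    have hgz : r₁ (g y₀) (g z) := _root_.trans hg₀ (hpres x₀ hx₀ z hz hx₀z)
    exact rel₁_map_swap_of_sameType hcan hz hy₀ hx hy (sameType_of_dow hdow₀ ⟨hxy, hdow⟩) hgz

theorem stmt_7 {D : Type*} (r₁ r₂ : D → D → Prop)
    [IsStrictTotalOrder D r₁] [IsStrictTotalOrder D r₂]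
    (X Y : Set D) (hdisj : Disjoint X Y) (g : D → D)
    (hXY : ∀ x ∈ X, ∀ y ∈ Y, r₁ x y)
    (hpres : ∀ x ∈ X, ∀ x' ∈ X, r₁ x x' → r₁ (g x) (g x'))
    (hcan : ∀ x ∈ X, ∀ y ∈ Y, ∀ x' ∈ X, ∀ y' ∈ Y,
      sameType r₁ r₂ x y x' y' → sameType r₁ r₂ (g x) (g y) (g x') (g y'))
    (hdense : ∀ x ∈ X, ∀ y ∈ Y, up r₁ r₂ x y →
      ∃ z ∈ X, r₁ x z ∧ dow r₁ r₂ z y)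
    (hwit : ∃ x ∈ X, ∃ y ∈ Y, up r₁ r₂ x y ∧ r₁ (g y) (g x)) :
    ∀ x ∈ X, ∀ y ∈ Y, r₁ (g y) (g x) :=
  stmt_7_general r₁ r₂ X Y g hXY hpres hcan hdense hwit
end

section
/- Let X₀, …, Xₙ be pairwise disjoint nonempty subsets of a set D with strict linear order <₁ such that Xᵢ <₁ Xⱼ whenever i < j. Suppose g : D → D is such that for all i < j < k, the images satisfy the cyclic condition cyc(g[Xᵢ], g[Xⱼ], g[Xₖ]) (meaning g[Xᵢ] <₁ g[Xⱼ] <₁ g[Xₖ], or g[Xⱼ] <₁ g[Xₖ] <₁ g[Xᵢ], or g[Xₖ] <₁ g[Xᵢ] <₁ g[Xⱼ]), and suppose g reverses <₁ between Xⱼ and Xⱼ₊₁ for some fixed j (i.e., g[Xⱼ₊₁] <₁ g[Xⱼ]). Then g[Xⱼ₊₁] <₁ g[Xⱼ₊₂] <₁ ⋯ <₁ g[Xₙ] <₁ g[X₀] <₁ ⋯ <₁ g[Xⱼ]. -/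
/-!
The cyclic condition is invariant under rotating the indices, so the family rotated to start at
`j + 1` is still cyclic, and its last block `g[Xⱼ]` lies above its first block `g[Xⱼ₊₁]`.
A cyclic family `A₀, …, Aₙ` with `A₀ < Aₙ` is linearly ordered: `A₀ < Aₙ` excludes the two
rotations of `cyc(A₀, Aₐ, Aₙ)` with `Aₙ < A₀`, so `A₀ < Aₐ` for all `a`; this in turn excludes
the rotations of `cyc(A₀, Aₐ, A_b)` with `A_b < A₀`, so `Aₐ < A_b`.
-/

/-- S <₁ T for sets: every element of S is r₁-below every element of T. -/
def setLt {D : Type*} (r₁ : D → D → Prop) (S T : Set D) : Prop :=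
  ∀ s ∈ S, ∀ t ∈ T, r₁ s t

/-- cyc(A,B,C): one of A <₁ B <₁ C, B <₁ C <₁ A, C <₁ A <₁ B holds. -/
def cyc {D : Type*} (r₁ : D → D → Prop) (A B C : Set D) : Prop :=
  (setLt r₁ A B ∧ setLt r₁ B C) ∨ (setLt r₁ B C ∧ setLt r₁ C A) ∨
  (setLt r₁ C A ∧ setLt r₁ A B)

section Cyc

variable {D : Type*} {r : D → D → Prop} {A B C : Set D}

theorem setLt.not_setLt [IsStrictOrder D r] (hA : A.Nonempty) (hB : B.Nonempty)
    (h : setLt r A B) : ¬ setLt r B A := by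
  obtain ⟨a, ha⟩ := hA
  obtain ⟨b, hb⟩ := hB
  exact fun h' => irrefl_of r a (trans_of r (h a ha b hb) (h' b hb a ha))

theorem cyc.rotate (h : cyc r A B C) : cyc r B C A := by
  unfold cyc at h ⊢
  tauto

theorem cyc.of_not_setLt_right (h : cyc r A B C) (hCA : ¬ setLt r C A) :
    setLt r A B ∧ setLt r B C := by
  unfold cyc at h
  tauto

end Cyc

section CyclicFamily

variable {D : Type*} {r : D → D → Prop} {A : ℕ → Set D} {n : ℕ}

def IsCyclicFamily (r : D → D → Prop) (A : ℕ → Set D) (n : ℕ) : Prop :=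
  ∀ i j k, i < j → j < k → k ≤ n → cyc r (A i) (A j) (A k)

/-- The index `i + m` taken modulo `n + 1`, for `i ≤ n` and `m ≤ n + 1`. -/
def rotateIdx (n m i : ℕ) : ℕ :=
  if i + m ≤ n then i + m else i + m - (n + 1)

theorem IsCyclicFamily.rotate (hA : IsCyclicFamily r A n) {m : ℕ} (hm : m ≤ n + 1) :
    IsCyclicFamily r (fun i => A (rotateIdx n m i)) n := by
  intro a b c hab hbc hc
  simp only [rotateIdx]
  split_ifs <;>
    first
    | exact hA _ _ _ (by omega) (by omega) (by omega)
    | exact (hA _ _ _ (by omega) (by omega) (by omega)).rotate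
    | exact (hA _ _ _ (by omega) (by omega) (by omega)).rotate.rotate

theorem IsCyclicFamily.setLt_of_lt [IsStrictOrder D r] (hA : IsCyclicFamily r A n)
    (hne : ∀ i ≤ n, (A i).Nonempty) (hends : setLt r (A 0) (A n))
    {a b : ℕ} (hab : a < b) (hb : b ≤ n) : setLt r (A a) (A b) := by
  have hfirst : ∀ c, 0 < c → c ≤ n → setLt r (A 0) (A c) := by
    intro c hc hcn
    rcases hcn.lt_or_eq with hcn | rfl
    · exact ((hA 0 c n hc hcn le_rfl).of_not_setLt_right
        (hends.not_setLt (hne 0 n.zero_le) (hne n le_rfl))).1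
    · exact hends
  rcases Nat.eq_zero_or_pos a with rfl | ha
  · exact hfirst b hab hb
  · have hb0 := hfirst b (ha.trans hab) hb
    exact ((hA 0 a b ha hab hb).of_not_setLt_right
      (hb0.not_setLt (hne 0 n.zero_le) (hne b hb))).2

end CyclicFamily

theorem stmt_16_general {D : Type*} (r₁ : D → D → Prop) [IsStrictTotalOrder D r₁]
    {n : ℕ} (X : ℕ → Set D)
    (hne : ∀ i ≤ n, (X i).Nonempty)
    (g : D → D)
    (hcyc : ∀ i j k, i < j → j < k → k ≤ n →
      cyc r₁ (g '' X i) (g '' X j) (g '' X k))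
    (j : ℕ) (hj : j + 1 ≤ n)
    (hrev : setLt r₁ (g '' X (j + 1)) (g '' X j)) :
    ∀ p ≤ n, ∀ q ≤ n,
      (if j + 1 ≤ p then p - (j + 1) else p + (n - j)) <
        (if j + 1 ≤ q then q - (j + 1) else q + (n - j)) →
      setLt r₁ (g '' X p) (g '' X q) := by
  intro p hp q hq hpq
  set B := fun i => g '' X (rotateIdx n (j + 1) i)
  have hB : IsCyclicFamily r₁ B n := IsCyclicFamily.rotate hcyc (by omega)
  have hBne : ∀ i ≤ n, (B i).Nonempty := fun i _ =>
    (hne _ (by unfold rotateIdx; split_ifs <;> omega)).image g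
  have hends : setLt r₁ (B 0) (B n) := by
    have h0 : rotateIdx n (j + 1) 0 = j + 1 := by unfold rotateIdx; split_ifs <;> omega
    have hn : rotateIdx n (j + 1) n = j := by unfold rotateIdx; split_ifs <;> omega
    simpa only [B, h0, hn] using hrev
  have hrot : ∀ s ≤ n, B (if j + 1 ≤ s then s - (j + 1) else s + (n - j)) = g '' X s := by
    intro s hs
    simp only [B, rotateIdx]
    congr 2
    split_ifs <;> omega
  rw [← hrot p hp, ← hrot q hq]
  exact hB.setLt_of_lt hBne hends hpq (by split_ifs <;> omega)

theorem stmt_16 {D : Type*} (r₁ : D → D → Prop) [IsStrictTotalOrder D r₁]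
    {n : ℕ} (X : ℕ → Set D)
    (hne : ∀ i ≤ n, (X i).Nonempty)
    (hdisj : ∀ i ≤ n, ∀ j ≤ n, i ≠ j → Disjoint (X i) (X j))
    (horder : ∀ i j, i < j → j ≤ n → setLt r₁ (X i) (X j))
    (g : D → D)
    (hcyc : ∀ i j k, i < j → j < k → k ≤ n →
      cyc r₁ (g '' X i) (g '' X j) (g '' X k))
    (j : ℕ) (hj : j + 1 ≤ n)
    (hrev : setLt r₁ (g '' X (j + 1)) (g '' X j)) :
    ∀ p ≤ n, ∀ q ≤ n,
      (if j + 1 ≤ p then p - (j + 1) else p + (n - j)) <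
        (if j + 1 ≤ q then q - (j + 1) else q + (n - j)) →
      setLt r₁ (g '' X p) (g '' X q) :=
  stmt_16_general r₁ X hne g hcyc j hj hrev
end
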